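/- arXiv:1908.02913 — 2 statements merged into one kernel-verified Lean document; each statement's English description precedes it below -/
import Mathlib

section
/- The disease-free equilibrium (1, 0, 0, 0, 0, 1, 0, 0) is the unique equilibrium of the rescaled dengue model with e_h = 0; equivalently, any equilibrium with e_h = 0 has e_h = i_h = h = e_v = i_v = r = 0 and s_h = s_v = 1. -/
/-- Any equilibrium of the rescaled dengue model with `e_h = 0` is the
disease-free equilibrium `(1,0,0,0,0,1,0,0)`. -/
theorem dfe_unique_with_eh_zero
    (μh μv βhv βvh αh αv γ δ p η : ℝ)
    (hμh : 0 < μh) (hμv : 0 < μv) (hβhv : 0 < βhv) (hβvh : 0 < βvh)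
    (hαh : 0 < αh) (hαv : 0 < αv) (hγ : 0 < γ) (hδ : 0 < δ)
    (hp : p ∈ Set.Icc (0:ℝ) 1) (hη : η ∈ Set.Icc (0:ℝ) 1) (hη1 : η < 1)
    (sh eh ih hos r sv ev iv : ℝ)
    (heq1 : μh - βhv * sh * iv - μh * sh = 0)
    (heq2 : βhv * sh * iv - (μh + αh) * eh = 0)
    (heq3 : (1 - p) * αh * eh - (μh + γ + δ) * ih = 0)
    (heq4 : p * αh * eh + δ * ih - (μh + γ) * hos = 0)
    (heq5 : γ * ih + γ * hos - μh * r = 0)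
    (heq6 : μv - βvh * sv * (ih + (1 - η) * hos) / (1 - η * hos) - μv * sv = 0)
    (heq7 : βvh * sv * (ih + (1 - η) * hos) / (1 - η * hos) - (μv + αv) * ev = 0)
    (heq8 : αv * ev - μv * iv = 0)
    (heh0 : eh = 0) :
    sh = 1 ∧ ih = 0 ∧ hos = 0 ∧ r = 0 ∧ sv = 1 ∧ ev = 0 ∧ iv = 0 := by
  subst heh0
  have hih : ih = 0 := by
    have h : (μh + γ + δ) * ih = 0 := by linarith [heq3]
    have : μh + γ + δ ≠ 0 := by positivity
    exact (mul_eq_zero.mp h).resolve_left this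
  have hhos : hos = 0 := by
    have h : (μh + γ) * hos = 0 := by rw [hih] at heq4; linarith [heq4]
    have : μh + γ ≠ 0 := by positivity
    exact (mul_eq_zero.mp h).resolve_left this
  have hr : r = 0 := by
    rw [hih, hhos] at heq5
    have : μh * r = 0 := by linarith
    exact (mul_eq_zero.mp this).resolve_left hμh.ne'
  rw [hih, hhos] at heq6 heq7
  simp only [mul_zero, add_zero, zero_add, sub_zero, zero_div] at heq6 heq7
  have hev : ev = 0 := by
    have : (μv + αv) * ev = 0 := by linarith
    exact (mul_eq_zero.mp this).resolve_left (by positivity)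
  have hiv : iv = 0 := by
    rw [hev] at heq8
    have : μv * iv = 0 := by linarith
    exact (mul_eq_zero.mp this).resolve_left hμv.ne'
  have hsh : sh = 1 := by
    rw [hiv] at heq1
    have : μh * sh = μh := by ring_nf at heq1 ⊢; linarith
    nlinarith
  have hsv : sv = 1 := by nlinarith
  exact ⟨hsh, hih, hhos, hr, hsv, hev, hiv⟩
end

section
/- At an endemic equilibrium of the rescaled dengue model, the exposed host fraction satisfies e_h* = (Γ_h Γ_v Δ_i − M)/(Δ_i − Δ_v), where Γ_h, Γ_v, Δ_i, Δ_v, M are the parameter combinations below; in particular a positive endemic value exists iff Γ_h Γ_v Δ_i > M and Δ_i > Δ_v (or both inequalities reversed). -/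
theorem eq_sub_div_of_eq_mul_div_add_mul {K : Type*} [Field K] {a e k M : K}
    (he : e ≠ 0) (hk : k ≠ 0) (h : e = a * e / (M + e * k)) : e = (a - M) / k := by
  have hden : M + e * k ≠ 0 := by
    rintro hzero
    rw [hzero, div_zero] at h
    exact he h
  have hden_eq : M + e * k = a := by
    rw [eq_div_iff hden] at h
    exact mul_left_cancel₀ he (by linear_combination h)
  rw [eq_div_iff hk]
  linear_combination hden_eq

theorem endemic_equilibrium_eh_general
    (Γh Γv Δi Δv M : ℝ)
    (hne : Δi ≠ Δv) :
    (∀ e : ℝ, e ≠ 0 → M + e * (Δi - Δv) ≠ 0 →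
        e = Γh * Γv * Δi * e / (M + e * (Δi - Δv)) →
        e = (Γh * Γv * Δi - M) / (Δi - Δv)) ∧
    (0 < (Γh * Γv * Δi - M) / (Δi - Δv) ↔
        (Γh * Γv * Δi > M ∧ Δi > Δv) ∨ (Γh * Γv * Δi < M ∧ Δi < Δv)) := by
  refine ⟨fun e he _ hfix => eq_sub_div_of_eq_mul_div_add_mul he (sub_ne_zero.mpr hne) hfix, ?_⟩
  rw [div_pos_iff, sub_pos, sub_pos, sub_neg, sub_neg]

/-- At an endemic equilibrium, the exposed host fraction equals
`(Γ_h Γ_v Δ_i − M)/(Δ_i − Δ_v)`; a positive endemic value exists iff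
`Γ_h Γ_v Δ_i > M` and `Δ_i > Δ_v`, or both inequalities are reversed. -/
theorem endemic_equilibrium_eh
    (μh μv βhv βvh αh αv γ δ p η : ℝ)
    (hμh : 0 < μh) (hμv : 0 < μv) (hβhv : 0 < βhv) (hβvh : 0 < βvh)
    (hαh : 0 < αh) (hαv : 0 < αv) (hγ : 0 < γ) (hδ : 0 < δ)
    (hp : p ∈ Set.Icc (0:ℝ) 1) (hη : η ∈ Set.Icc (0:ℝ) 1)
    (Γh Γv Δi Δv M : ℝ)
    (hΓh : Γh = βhv * μh * αv / (μh + αh))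
    (hΓv : Γv = βvh * μv / (μv + αv))
    (hΔi : Δi = (1 - p) * αh * (μh + γ) + (1 - η) * p * αh * (μh + γ + δ) +
      (1 - η) * δ * (1 - p) * αh)
    (hΔv : Δv = η * μv * αh * (μh + γ + δ) + η * μv * δ * (1 - p) * αh)
    (hM : M = μv * (μh + γ) * (μh + γ + δ))
    (hne : Δi ≠ Δv) :
    (∀ e : ℝ, e ≠ 0 → M + e * (Δi - Δv) ≠ 0 →
        e = Γh * Γv * Δi * e / (M + e * (Δi - Δv)) →
        e = (Γh * Γv * Δi - M) / (Δi - Δv)) ∧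
    (0 < (Γh * Γv * Δi - M) / (Δi - Δv) ↔
        (Γh * Γv * Δi > M ∧ Δi > Δv) ∨ (Γh * Γv * Δi < M ∧ Δi < Δv)) :=
  endemic_equilibrium_eh_general Γh Γv Δi Δv M hne
end
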